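/- Let y be a fractional cache state and let X be a random vector taking values in {0,1}^{2N} such that for every i ∈ {1,…,K−1}: E[ ∏_{j ∈ I_i} (1 − X_{π_j}/(k − σ_i)) ] ≤ ∏_{j ∈ I_i} (1 − y_{π_j}/(k − σ_i)). Then E[ L(X) ] ≥ L(y). -/

import Mathlib

open MeasureTheory

namespace ACAI

/-- `sigma N π i` = number of indices `j ∈ {1,…,i}` with `π j > N`, i.e. the number of
objects among the `i` cheapest that are served from the server. -/
def sigma (N : ℕ) (π : ℕ → ℕ) (i : ℕ) : ℕ :=
  ((Finset.Icc 1 i).filter (fun j => N < π j)).card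

/-- `Kmin N k π` = least index `i` with `sigma N π i = k`. -/
noncomputable def Kmin (N k : ℕ) (π : ℕ → ℕ) : ℕ :=
  sInf {i | sigma N π i = k}

/-- `alpha c π i = c (π (i+1)) - c (π i)`. -/
noncomputable def alpha (c : ℕ → ℝ) (π : ℕ → ℕ) (i : ℕ) : ℝ :=
  c (π (i + 1)) - c (π i)

/-- A fractional cache state: `y ∈ [0,1]^{2N}` with `∑_{i=1}^{N} y i = h` and
`y (i+N) = 1 - y i` for `i ∈ {1,…,N}`. -/
def IsFrac (N h : ℕ) (y : ℕ → ℝ) : Prop :=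
  (∀ i ∈ Finset.Icc 1 (2 * N), y i ∈ Set.Icc (0 : ℝ) 1) ∧
  (∑ i ∈ Finset.Icc 1 N, y i = (h : ℝ)) ∧
  (∀ i ∈ Finset.Icc 1 N, y (i + N) = 1 - y i)

/-- An integral cache state: a fractional cache state with `{0,1}` coordinates. -/
def IsInt (N h : ℕ) (y : ℕ → ℝ) : Prop :=
  IsFrac N h y ∧ ∀ i ∈ Finset.Icc 1 (2 * N), y i = 0 ∨ y i = 1

/-- A request over the augmented catalog `U = {1,…,2N}`: nonnegative costs `c` with
`c (i+N) = c i + cf` for catalog objects `i ∈ {1,…,N}`, and a bijection `π` of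
`{1,…,2N}` sorting the costs nondecreasingly and placing each `i ∈ {1,…,N}` before
`i + N`. -/
def Request (N : ℕ) (cf : ℝ) (c : ℕ → ℝ) (π : ℕ → ℕ) : Prop :=
  (∀ i ∈ Finset.Icc 1 (2 * N), 0 ≤ c i) ∧
  (∀ i ∈ Finset.Icc 1 N, c (i + N) = c i + cf) ∧
  Set.BijOn π (Set.Icc 1 (2 * N)) (Set.Icc 1 (2 * N)) ∧
  (∀ i, 1 ≤ i → i < 2 * N → c (π i) ≤ c (π (i + 1))) ∧
  (∀ j l, j ∈ Set.Icc 1 (2 * N) → l ∈ Set.Icc 1 (2 * N) →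
    π j ≤ N → π l = π j + N → j < l)

/-- The caching gain
`G(y) = ∑_{i=1}^{K-1} α_i · min { k - σ_i, (∑_{j=1}^{i} y_{π j}) - σ_i }`. -/
noncomputable def gain (N k : ℕ) (c : ℕ → ℝ) (π : ℕ → ℕ) (y : ℕ → ℝ) : ℝ :=
  ∑ i ∈ Finset.Icc 1 (Kmin N k π - 1),
    alpha c π i *
      min ((k : ℝ) - sigma N π i) ((∑ j ∈ Finset.Icc 1 i, y (π j)) - sigma N π i)

/-- `Iset N π i = { j ∈ {1,…,i} : π j ≤ N and π j + N ∉ {π 1, …, π i} }`. -/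
def Iset (N : ℕ) (π : ℕ → ℕ) (i : ℕ) : Finset ℕ :=
  (Finset.Icc 1 i).filter (fun j => π j ≤ N ∧ ∀ l ∈ (Finset.Icc 1 i : Finset ℕ), π l ≠ π j + N)

/-- The auxiliary (multilinear) gain
`L(y) = ∑_{i=1}^{K-1} α_i (k - σ_i) (1 - ∏_{j ∈ I_i} (1 - y_{π j}/(k - σ_i)))`. -/
noncomputable def aux (N k : ℕ) (c : ℕ → ℝ) (π : ℕ → ℕ) (y : ℕ → ℝ) : ℝ :=
  ∑ i ∈ Finset.Icc 1 (Kmin N k π - 1),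
    alpha c π i * ((k : ℝ) - sigma N π i) *
      (1 - ∏ j ∈ Iset N π i, (1 - y (π j) / ((k : ℝ) - sigma N π i)))

/-
The auxiliary gain is a nonnegative combination `∑ᵢ aᵢ (1 - Pᵢ)` of one minus products, with
`aᵢ = αᵢ (k - σᵢ) ≥ 0`; by linearity of expectation it suffices to compare each `E[Pᵢ(X)]`
with `Pᵢ(y)`, which is exactly the hypothesis. Nonnegativity of `aᵢ` and integrability of
`Pᵢ(X)` come from `K ≤ 2N`: `σ` starts at `0`, grows by at most one per step and reaches `N ≥ k`
at `2N`, so every index `j ≤ i < K` lies in the catalog, where `X` is `{0,1}`-valued.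
-/

theorem exists_eq_of_le_of_succ_le {f : ℕ → ℕ} (h0 : f 0 = 0)
    (hstep : ∀ m, f (m + 1) ≤ f m + 1) {k n : ℕ} (hk : k ≤ f n) : ∃ m ≤ n, f m = k := by
  induction n with
  | zero => exact ⟨0, le_rfl, by omega⟩
  | succ n ih =>
    by_cases hkn : k ≤ f n
    · obtain ⟨m, hmn, hm⟩ := ih hkn
      exact ⟨m, by omega, hm⟩
    · exact ⟨n + 1, le_rfl, by have := hstep n; omega⟩

section Integral

variable {Ω : Type*} [MeasurableSpace Ω] {μ : Measure Ω}

theorem integrable_finset_prod_of_bound [IsFiniteMeasure μ] {ι : Type*} (s : Finset ι)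
    {f : ι → Ω → ℝ} (hf : ∀ j ∈ s, Measurable (f j)) {C : ℝ}
    (hfC : ∀ j ∈ s, ∀ ω, |f j ω| ≤ C) : Integrable (fun ω => ∏ j ∈ s, f j ω) μ := by
  refine .of_bound (Finset.measurable_prod s hf).aestronglyMeasurable (C ^ s.card)
    (.of_forall fun ω => ?_)
  rw [Real.norm_eq_abs, Finset.abs_prod, ← Finset.prod_const]
  exact Finset.prod_le_prod (fun j _ => abs_nonneg _) fun j hj => hfC j hj ω

theorem abs_one_sub_div_le {x : ℝ} (hx : |x| ≤ 1) (r : ℝ) : |1 - x / r| ≤ 1 + |r|⁻¹ :=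
  calc |1 - x / r| ≤ |1| + |x / r| := abs_sub _ _
    _ ≤ 1 + |r|⁻¹ := by
      rw [abs_one, abs_div, div_eq_mul_inv]
      gcongr
      exact mul_le_of_le_one_left (by positivity) hx

theorem mul_one_sub_le_integral_mul_one_sub [IsProbabilityMeasure μ] {f : Ω → ℝ}
    (hf : Integrable f μ) {a b : ℝ} (ha : 0 ≤ a) (hfb : ∫ ω, f ω ∂μ ≤ b) :
    a * (1 - b) ≤ ∫ ω, a * (1 - f ω) ∂μ := by
  rw [integral_const_mul, integral_sub (integrable_const 1) hf, integral_const, probReal_univ,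
    one_smul]
  exact mul_le_mul_of_nonneg_left (by linarith) ha

end Integral

section Sigma

variable {N : ℕ} {π : ℕ → ℕ}

theorem sigma_zero : sigma N π 0 = 0 := by
  simp [sigma]

theorem sigma_succ_le (i : ℕ) : sigma N π (i + 1) ≤ sigma N π i + 1 := by
  unfold sigma
  rw [← Finset.insert_Icc_right_eq_Icc_add_one (by omega), Finset.filter_insert]
  split
  · exact Finset.card_insert_le _ _
  · omega

theorem exists_sigma_eq {k n : ℕ} (hk : k ≤ sigma N π n) : ∃ m ≤ n, sigma N π m = k :=
  exists_eq_of_le_of_succ_le sigma_zero sigma_succ_le hk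

theorem sigma_two_mul (hπ : Set.BijOn π (Set.Icc 1 (2 * N)) (Set.Icc 1 (2 * N))) :
    sigma N π (2 * N) = N := by
  suffices sigma N π (2 * N) = (Finset.Icc (N + 1) (2 * N)).card by
    rw [this, Nat.card_Icc]; omega
  apply Finset.card_nbij π
  · intro a ha
    simp only [Finset.coe_filter, Finset.mem_Icc, Set.mem_ofPred_eq, Finset.coe_Icc,
      Set.mem_Icc] at ha ⊢
    have := hπ.mapsTo (Set.mem_Icc.2 ha.1)
    simp only [Set.mem_Icc] at this
    omega
  · intro a ha b hb hab
    simp only [Finset.coe_filter, Finset.mem_Icc, Set.mem_ofPred_eq] at ha hb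
    exact hπ.injOn (Set.mem_Icc.2 ha.1) (Set.mem_Icc.2 hb.1) hab
  · intro b hb
    simp only [Finset.coe_Icc, Set.mem_Icc] at hb
    obtain ⟨a, ha, rfl⟩ := hπ.surjOn (Set.mem_Icc.2 ⟨by omega, hb.2⟩)
    exact ⟨a, by simpa using ⟨ha, hb.1⟩, rfl⟩

theorem sigma_lt_of_lt_Kmin {k i : ℕ} (hi : i < Kmin N k π) : sigma N π i < k := by
  by_contra! hki
  obtain ⟨m, hmi, hm⟩ := exists_sigma_eq hki
  have := Nat.sInf_le (show m ∈ {j | sigma N π j = k} from hm)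
  unfold Kmin at hi
  omega

theorem Kmin_le_two_mul {k : ℕ} (hπ : Set.BijOn π (Set.Icc 1 (2 * N)) (Set.Icc 1 (2 * N)))
    (hkN : k ≤ N) : Kmin N k π ≤ 2 * N := by
  obtain ⟨m, hm, hmk⟩ := exists_sigma_eq (n := 2 * N) (k := k) (π := π) (sigma_two_mul hπ ▸ hkN)
  exact (Nat.sInf_le (show m ∈ {j | sigma N π j = k} from hmk)).trans hm

theorem mem_Icc_of_mem_Iset (hπ : Set.BijOn π (Set.Icc 1 (2 * N)) (Set.Icc 1 (2 * N)))
    {i j : ℕ} (hi : i ≤ 2 * N) (hj : j ∈ Iset N π i) : π j ∈ Finset.Icc 1 (2 * N) := by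
  simp only [Iset, Finset.mem_filter, Finset.mem_Icc] at hj
  simpa using hπ.mapsTo (Set.mem_Icc.2 ⟨hj.1.1, by omega⟩)

end Sigma

theorem expected_aux_ge_general
    {Ω : Type*} [MeasurableSpace Ω] (μ : Measure Ω) [IsProbabilityMeasure μ]
    (N k h : ℕ) (hkh : k ≤ h) (hhN : h ≤ N)
    (cf : ℝ) (c : ℕ → ℝ) (π : ℕ → ℕ)
    (hreq : Request N cf c π)
    (y : ℕ → ℝ)
    (X : Ω → ℕ → ℝ)
    (hXmeas : ∀ i, Measurable fun ω => X ω i)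
    (hX01 : ∀ ω, ∀ i ∈ Finset.Icc 1 (2 * N), X ω i = 0 ∨ X ω i = 1)
    (hprod : ∀ i ∈ Finset.Icc 1 (Kmin N k π - 1),
      (∫ ω, ∏ j ∈ Iset N π i, (1 - X ω (π j) / ((k : ℝ) - sigma N π i)) ∂μ)
        ≤ ∏ j ∈ Iset N π i, (1 - y (π j) / ((k : ℝ) - sigma N π i))) :
    aux N k c π y ≤ ∫ ω, aux N k c π (X ω) ∂μ := by
  obtain ⟨-, -, hπ, hcmono, -⟩ := hreq
  have hK : Kmin N k π ≤ 2 * N := Kmin_le_two_mul hπ (hkh.trans hhN)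
  have hcoef : ∀ i ∈ Finset.Icc 1 (Kmin N k π - 1),
      0 ≤ alpha c π i * ((k : ℝ) - sigma N π i) := by
    intro i hi
    rw [Finset.mem_Icc] at hi
    have hσ : (sigma N π i : ℝ) ≤ k := by exact_mod_cast (sigma_lt_of_lt_Kmin (by omega)).le
    exact mul_nonneg (sub_nonneg.2 (hcmono i hi.1 (by omega))) (sub_nonneg.2 hσ)
  have hint : ∀ i ∈ Finset.Icc 1 (Kmin N k π - 1), Integrable
      (fun ω => ∏ j ∈ Iset N π i, (1 - X ω (π j) / ((k : ℝ) - sigma N π i))) μ := by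
    intro i hi
    refine integrable_finset_prod_of_bound _ (C := 1 + |(k : ℝ) - sigma N π i|⁻¹)
      (fun j _ => measurable_const.sub ((hXmeas (π j)).div_const _)) fun j hj ω => ?_
    rw [Finset.mem_Icc] at hi
    rcases hX01 ω (π j) (mem_Icc_of_mem_Iset hπ (by omega) hj) with hx | hx <;>
      exact abs_one_sub_div_le (by simp [hx]) _
  unfold aux
  rw [integral_finsetSum]
  · exact Finset.sum_le_sum fun i hi =>
      mul_one_sub_le_integral_mul_one_sub (hint i hi) (hcoef i hi) (hprod i hi)
  · exact fun i hi => ((integrable_const 1).sub (hint i hi)).const_mul _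

/-- **Auxiliary gain under negatively-correlated rounding (DepRound property).**
If `X` is a random `{0,1}^{2N}`-valued vector satisfying, for each `i ∈ {1,…,K-1}`,
`E[∏_{j ∈ I_i} (1 - X_{π j}/(k - σ_i))] ≤ ∏_{j ∈ I_i} (1 - y_{π j}/(k - σ_i))`,
then `E[L(X)] ≥ L(y)`. -/
theorem expected_aux_ge
    {Ω : Type*} [MeasurableSpace Ω] (μ : Measure Ω) [IsProbabilityMeasure μ]
    (N k h : ℕ) (hN : 0 < N) (hk : 0 < k) (hkh : k ≤ h) (hhN : h ≤ N)
    (cf : ℝ) (hcf : 0 < cf) (c : ℕ → ℝ) (π : ℕ → ℕ)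
    (hreq : Request N cf c π)
    (y : ℕ → ℝ) (hy : IsFrac N h y)
    (X : Ω → ℕ → ℝ)
    (hXmeas : ∀ i, Measurable fun ω => X ω i)
    (hX01 : ∀ ω, ∀ i ∈ Finset.Icc 1 (2 * N), X ω i = 0 ∨ X ω i = 1)
    (hprod : ∀ i ∈ Finset.Icc 1 (Kmin N k π - 1),
      (∫ ω, ∏ j ∈ Iset N π i, (1 - X ω (π j) / ((k : ℝ) - sigma N π i)) ∂μ)
        ≤ ∏ j ∈ Iset N π i, (1 - y (π j) / ((k : ℝ) - sigma N π i))) :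
    aux N k c π y ≤ ∫ ω, aux N k c π (X ω) ∂μ :=
  expected_aux_ge_general μ N k h hkh hhN cf c π hreq y X hXmeas hX01 hprod

end ACAI
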